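/- Let I ≥ 2, let E^s_1 > E^s_2 > … > E^s_I be real sampling points, let v_1, …, v_I be reals, for i ∈ {1,…,I−1} let s_i = (v_i − v_{i+1})/(E^s_i − E^s_{i+1}), and define V̂(E) = min over i ∈ {1,…,I−1} of ( v_i + s_i · (E − E^s_i) ); assume the slopes are monotone, s_1 ≤ s_2 ≤ … ≤ s_{I−1} (concavity of the samples). Fix i ∈ {1,…,I−1} and set C = s_i. Then for every δ with 0 ≤ δ ≤ E^s_i − E^s_{i+1}, V̂(E^s_i − δ) = v_i − C·δ. Consequently, for any set P, any functions O : P → ℝ and Δ : P → ℝ with 0 ≤ Δ(p) ≤ E^s_i − E^s_{i+1} for all p ∈ P, and any γ ≥ 0, the function p ↦ O(p) + γ·V̂(E^s_i − Δ(p)) is identically equal on P to the linear-degradation-cost objective p ↦ O(p) + γ·(v_i − C·Δ(p)); in particular the two objectives have the same supremum and the same set of maximizers over P. -/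

import Mathlib

/-!
The `k`-th affine piece of `V̂` is the chord through `(E^s_k, v_k)` and `(E^s_{k+1}, v_{k+1})`, so
consecutive pieces agree at `E^s_{k+1}` and differ by `(s_k - s_{k+1}) (E - E^s_{k+1})`. For
`E ∈ [E^s_{i+1}, E^s_i]` and monotone slopes, the pieces therefore decrease in `k` up to `i` and
increase from `i` on, so the minimum defining `V̂ E` is attained by piece `i`, which at
`E = E^s_i - δ` equals `v_i - s_i δ`. Both objectives then agree pointwise.
-/

def segmentLine (Es v s : ℕ → ℝ) (k : ℕ) (E : ℝ) : ℝ := v k + s k * (E - Es k)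

section SegmentLine

variable {Es v s : ℕ → ℝ} {k : ℕ} {E : ℝ}

lemma segmentLine_sub_segmentLine_succ (hEk : Es (k + 1) ≠ Es k)
    (hsk : s k = (v k - v (k + 1)) / (Es k - Es (k + 1))) (E : ℝ) :
    segmentLine Es v s k E - segmentLine Es v s (k + 1) E =
      (s k - s (k + 1)) * (E - Es (k + 1)) := by
  have hchord : s k * (Es k - Es (k + 1)) = v k - v (k + 1) := by
    rw [hsk]; exact div_mul_cancel₀ _ (sub_ne_zero.mpr hEk.symm)
  unfold segmentLine
  linear_combination -hchord

lemma segmentLine_succ_le (hEk : Es (k + 1) ≠ Es k)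
    (hsk : s k = (v k - v (k + 1)) / (Es k - Es (k + 1))) (hmono : s k ≤ s (k + 1))
    (hE : E ≤ Es (k + 1)) :
    segmentLine Es v s (k + 1) E ≤ segmentLine Es v s k E := by
  have := segmentLine_sub_segmentLine_succ hEk hsk E
  nlinarith [mul_nonneg (sub_nonneg.mpr hmono) (sub_nonneg.mpr hE)]

lemma segmentLine_le_succ (hEk : Es (k + 1) ≠ Es k)
    (hsk : s k = (v k - v (k + 1)) / (Es k - Es (k + 1))) (hmono : s k ≤ s (k + 1))
    (hE : Es (k + 1) ≤ E) :
    segmentLine Es v s k E ≤ segmentLine Es v s (k + 1) E := by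
  have := segmentLine_sub_segmentLine_succ hEk hsk E
  nlinarith [mul_nonneg (sub_nonneg.mpr hmono) (sub_nonneg.mpr hE)]

lemma isLeast_segmentLine {I i : ℕ} (hEs : ∀ k : ℕ, k + 1 < I → Es (k + 1) < Es k)
    (hs : ∀ k : ℕ, s k = (v k - v (k + 1)) / (Es k - Es (k + 1)))
    (hsmono : ∀ k : ℕ, k + 2 < I → s k ≤ s (k + 1)) (hi : i + 1 < I)
    (hE_lower : Es (i + 1) ≤ E) (hE_upper : E ≤ Es i) :
    IsLeast {y : ℝ | ∃ k : ℕ, k + 1 < I ∧ y = segmentLine Es v s k E}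
      (segmentLine Es v s i E) := by
  have hEs_anti : AntitoneOn Es (Set.Iio I) :=
    antitoneOn_of_succ_le Set.ordConnected_Iio fun k _ _ hk1 =>
      (hEs k (by simpa using hk1)).le
  have hleft : AntitoneOn (segmentLine Es v s · E) (Set.Iic i) :=
    antitoneOn_of_succ_le Set.ordConnected_Iic fun k _ _ hk1 => by
      rw [Set.mem_Iic, Order.succ_eq_add_one] at hk1
      rw [Order.succ_eq_add_one]
      exact segmentLine_succ_le (hEs k (by omega)).ne (hs k) (hsmono k (by omega))
        (hE_upper.trans
          (hEs_anti (Set.mem_Iio.mpr (by omega)) (Set.mem_Iio.mpr (by omega)) hk1))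
  have hright : MonotoneOn (segmentLine Es v s · E) (Set.Ico i (I - 1)) :=
    monotoneOn_of_le_succ Set.ordConnected_Ico fun k _ hk hk1 => by
      rw [Set.mem_Ico] at hk
      rw [Set.mem_Ico, Order.succ_eq_add_one] at hk1
      rw [Order.succ_eq_add_one]
      exact segmentLine_le_succ (hEs k (by omega)).ne (hs k) (hsmono k (by omega))
        ((hEs_anti (Set.mem_Iio.mpr (by omega)) (Set.mem_Iio.mpr (by omega)) (by omega)).trans
          hE_lower)
  refine ⟨⟨i, hi, rfl⟩, ?_⟩
  rintro y ⟨k, hk, rfl⟩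
  rcases le_total k i with hki | hik
  · exact hleft hki (Set.mem_Iic.mpr le_rfl) hki
  · exact hright ⟨le_rfl, by omega⟩ ⟨hik, by omega⟩ hik

end SegmentLine

theorem marginal_degradation_cost_objective_equivalence_general
    (I : ℕ)
    (Es : ℕ → ℝ)
    (hEs : ∀ k : ℕ, k + 1 < I → Es (k + 1) < Es k)
    (v : ℕ → ℝ)
    (s : ℕ → ℝ)
    (hs : ∀ k : ℕ, s k = (v k - v (k + 1)) / (Es k - Es (k + 1)))
    (hsmono : ∀ k : ℕ, k + 2 < I → s k ≤ s (k + 1))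
    (Vhat : ℝ → ℝ)
    (hVhat : ∀ E : ℝ, Vhat E =
      sInf {y : ℝ | ∃ k : ℕ, k + 1 < I ∧ y = v k + s k * (E - Es k)})
    (i : ℕ) (hi : i + 1 < I)
    (Cm : ℝ) (hCm : Cm = s i) :
    (∀ δ : ℝ, 0 ≤ δ → δ ≤ Es i - Es (i + 1) →
      Vhat (Es i - δ) = v i - Cm * δ) ∧
    (∀ (P : Type) (O Δ : P → ℝ),
      (∀ p : P, 0 ≤ Δ p ∧ Δ p ≤ Es i - Es (i + 1)) →
      ∀ γ : ℝ, 0 ≤ γ →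
        (∀ p : P, O p + γ * Vhat (Es i - Δ p) = O p + γ * (v i - Cm * Δ p)) ∧
        sSup {y : ℝ | ∃ p : P, y = O p + γ * Vhat (Es i - Δ p)} =
          sSup {y : ℝ | ∃ p : P, y = O p + γ * (v i - Cm * Δ p)} ∧
        {p : P | ∀ q : P, O q + γ * Vhat (Es i - Δ q) ≤ O p + γ * Vhat (Es i - Δ p)} =
          {p : P | ∀ q : P, O q + γ * (v i - Cm * Δ q) ≤ O p + γ * (v i - Cm * Δ p)}) := by
  have hVhat_segment : ∀ δ : ℝ, 0 ≤ δ → δ ≤ Es i - Es (i + 1) →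
      Vhat (Es i - δ) = v i - Cm * δ := by
    intro δ hδ hδ_width
    rw [hVhat, hCm]
    exact (isLeast_segmentLine hEs hs hsmono hi (by linarith) (by linarith)).csInf_eq.trans
      (by unfold segmentLine; ring)
  refine ⟨hVhat_segment, fun P O Δ hΔ γ _ => ?_⟩
  have hobj : ∀ p : P, O p + γ * Vhat (Es i - Δ p) = O p + γ * (v i - Cm * Δ p) := fun p => by
    rw [hVhat_segment _ (hΔ p).1 (hΔ p).2]
  exact ⟨hobj, by simp only [hobj], by simp only [hobj]⟩

/-- On segment `i` of the concave piecewise linear value function, the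
approximation is exactly linear with slope equal to the marginal degradation
cost `C = s i`. Consequently, replacing the piecewise linear value function by
the linear-degradation-cost objective with marginal cost `C` yields an
identical objective on any decision set whose daily degradation does not
exceed the segment width; in particular both objectives have the same
supremum and the same set of maximizers. -/
theorem marginal_degradation_cost_objective_equivalence
    (I : ℕ) (hI : 2 ≤ I)
    (Es : ℕ → ℝ)
    (hEs : ∀ k : ℕ, k + 1 < I → Es (k + 1) < Es k)
    (v : ℕ → ℝ)
    (s : ℕ → ℝ)
    (hs : ∀ k : ℕ, s k = (v k - v (k + 1)) / (Es k - Es (k + 1)))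
    (hsmono : ∀ k : ℕ, k + 2 < I → s k ≤ s (k + 1))
    (Vhat : ℝ → ℝ)
    (hVhat : ∀ E : ℝ, Vhat E =
      sInf {y : ℝ | ∃ k : ℕ, k + 1 < I ∧ y = v k + s k * (E - Es k)})
    (i : ℕ) (hi : i + 1 < I)
    (Cm : ℝ) (hCm : Cm = s i) :
    (∀ δ : ℝ, 0 ≤ δ → δ ≤ Es i - Es (i + 1) →
      Vhat (Es i - δ) = v i - Cm * δ) ∧
    (∀ (P : Type) (O Δ : P → ℝ),
      (∀ p : P, 0 ≤ Δ p ∧ Δ p ≤ Es i - Es (i + 1)) →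
      ∀ γ : ℝ, 0 ≤ γ →
        (∀ p : P, O p + γ * Vhat (Es i - Δ p) = O p + γ * (v i - Cm * Δ p)) ∧
        sSup {y : ℝ | ∃ p : P, y = O p + γ * Vhat (Es i - Δ p)} =
          sSup {y : ℝ | ∃ p : P, y = O p + γ * (v i - Cm * Δ p)} ∧
        {p : P | ∀ q : P, O q + γ * Vhat (Es i - Δ q) ≤ O p + γ * Vhat (Es i - Δ p)} =
          {p : P | ∀ q : P, O q + γ * (v i - Cm * Δ q) ≤ O p + γ * (v i - Cm * Δ p)}) :=
  marginal_degradation_cost_objective_equivalence_general I Es hEs v s hs hsmono Vhat hVhat i hi Cm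
    hCm
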